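/- arXiv:2602.08745 — 4 statements merged into one kernel-verified Lean document; each statement's English description precedes it below -/
import Mathlib

section
/- Let H be a simple connected graph with m edges. Then H has an orientation of its edges in which every vertex has even out-degree if and only if m is even. -/
/-!
Every edge is counted in exactly one out-degree, so the out-degrees of an orientation sum to `m`
and even out-degrees force `m` to be even. Conversely, reversing all edges along a walk from `u`
to `v` changes the parity of the out-degree exactly at `u` and `v`. In a connected graph such
moves turn any orientation into one with any prescribed out-degree parities whose total is `m`
modulo 2; for even `m`, all parities can be made even.
-/

/-- Out-degree of `v` under a Bool-valued orientation `o`. -/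
def outdeg {V : Type*} [Fintype V] (o : V → V → Bool) (v : V) : ℕ :=
  (Finset.univ.filter fun w => o v w = true).card

open Finset

section

variable {V : Type*}

def outParity [Fintype V] (o : V → V → Bool) (v : V) : ZMod 2 := outdeg o v

theorem natCast_card_filter_xor {α : Type*} (s : Finset α) (f g : α → Bool) :
    (#(s.filter fun a => (f a ^^ g a) = true) : ZMod 2) =
      #(s.filter fun a => f a = true) + #(s.filter fun a => g a = true) := by
  simp only [card_filter, Nat.cast_sum, ← sum_add_distrib]
  refine sum_congr rfl fun a _ => ?_
  cases f a <;> cases g a <;> decide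

def reverseEdge [DecidableEq V] (a b : V) (o : V → V → Bool) : V → V → Bool :=
  fun x y => o x y ^^ decide (s(x, y) = s(a, b))

theorem outParity_reverseEdge [Fintype V] [DecidableEq V] {a b : V} (hab : a ≠ b)
    (o : V → V → Bool) :
    outParity (reverseEdge a b o) = outParity o + Pi.single a 1 + Pi.single b 1 := by
  funext x
  simp only [outParity, outdeg, reverseEdge, natCast_card_filter_xor, Pi.add_apply, add_assoc,
    decide_eq_true_eq, Sym2.eq_iff]
  congr 1
  rcases eq_or_ne x a with rfl | hxa
  · simp [hab, filter_eq']
  rcases eq_or_ne x b with rfl | hxb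
  · simp [hab.symm, filter_eq']
  · simp [hxa, hxb]

theorem Pi.zmod_two_add_self (f : V → ZMod 2) : f + f = 0 :=
  funext fun _ => CharTwo.add_self_eq_zero _

theorem sum_outdeg_flip [Fintype V] (o : V → V → Bool) :
    ∑ v, outdeg (flip o) v = ∑ v, outdeg o v := by
  simp only [outdeg, card_filter]
  exact sum_comm

namespace SimpleGraph

def IsOrientation (G : SimpleGraph V) (o : V → V → Bool) : Prop :=
  (∀ v w, o v w = true → G.Adj v w) ∧ (∀ v w, G.Adj v w → o v w = !o w v)

variable {G : SimpleGraph V} {o : V → V → Bool}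

theorem exists_isOrientation (G : SimpleGraph V) : ∃ o, G.IsOrientation o := by
  classical
  let : LinearOrder V := IsWellOrder.linearOrder WellOrderingRel
  refine ⟨fun v w => decide (G.Adj v w ∧ v < w), fun v w h => (of_decide_eq_true h).1,
    fun v w h => ?_⟩
  rcases lt_or_gt_of_ne h.ne with hlt | hgt
  · simp [h, h.symm, hlt, hlt.not_gt]
  · simp [h, h.symm, hgt, hgt.not_gt]

theorem IsOrientation.reverseEdge [DecidableEq V] (ho : G.IsOrientation o) {a b : V}
    (hab : G.Adj a b) : G.IsOrientation (reverseEdge a b o) := by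
  refine ⟨fun v w h => ?_, fun v w h => ?_⟩
  · by_cases he : s(v, w) = s(a, b)
    · rwa [← mem_edgeSet, he]
    · simp only [_root_.reverseEdge, he, decide_false, Bool.xor_false] at h
      exact ho.1 v w h
  · simp only [_root_.reverseEdge, Sym2.eq_swap (a := w), ho.2 v w h, Bool.not_xor]

theorem IsOrientation.outdeg_add_outdeg_flip [Fintype V] [DecidableRel G.Adj]
    (ho : G.IsOrientation o) (v : V) : outdeg o v + outdeg (flip o) v = G.degree v := by
  rw [← card_neighborFinset_eq_degree, neighborFinset_eq_filter, outdeg, outdeg, card_filter,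
    card_filter, card_filter, ← sum_add_distrib]
  refine sum_congr rfl fun w _ => ?_
  by_cases h : G.Adj v w
  · rw [flip, ho.2 v w h]
    cases o w v <;> simp [h]
  · have hvw : o v w = false := by simpa using mt (ho.1 v w) h
    have hwv : o w v = false := by simpa using mt (ho.1 w v) fun hwv => h hwv.symm
    simp [flip, h, hvw, hwv]

theorem IsOrientation.sum_outdeg [Fintype V] [DecidableEq V] [DecidableRel G.Adj]
    (ho : G.IsOrientation o) : ∑ v, outdeg o v = #G.edgeFinset := by
  have h := G.sum_degrees_eq_twice_card_edges
  simp only [← ho.outdeg_add_outdeg_flip, sum_add_distrib, sum_outdeg_flip] at h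
  omega

theorem IsOrientation.sum_outParity [Fintype V] [DecidableEq V] [DecidableRel G.Adj]
    (ho : G.IsOrientation o) : ∑ v, outParity o v = #G.edgeFinset := by
  simp only [outParity, ← Nat.cast_sum, ho.sum_outdeg]

/-- Reverse the edges of the walk one by one: each inner vertex is an endpoint of two consecutive
reversals. -/
theorem IsOrientation.exists_outParity_eq_of_walk [Fintype V] [DecidableEq V]
    {u v : V} (p : G.Walk u v) (ho : G.IsOrientation o) :
    ∃ o', G.IsOrientation o' ∧ outParity o' = outParity o + Pi.single u 1 + Pi.single v 1 := by
  induction p generalizing o with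
  | @nil w =>
    exact ⟨o, ho, by linear_combination -Pi.zmod_two_add_self (Pi.single w 1)⟩
  | @cons u x v hux p ih =>
    obtain ⟨o', ho', h⟩ := ih (ho.reverseEdge hux)
    refine ⟨o', ho', ?_⟩
    rw [h, outParity_reverseEdge hux.ne]
    linear_combination Pi.zmod_two_add_self (Pi.single x 1)

theorem IsOrientation.exists_outParity_eq_add_single_add_single [Fintype V] [DecidableEq V]
    (hconn : G.Connected) (ho : G.IsOrientation o) (u v : V) (c : ZMod 2) :
    ∃ o', G.IsOrientation o' ∧ outParity o' = outParity o + Pi.single u c + Pi.single v c := by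
  obtain rfl | rfl : c = 0 ∨ c = 1 := by revert c; decide
  · exact ⟨o, ho, by simp only [Pi.single_zero, add_zero]⟩
  · exact ho.exists_outParity_eq_of_walk (hconn u v).some

theorem IsOrientation.exists_outParity_eq_add_sum [Fintype V] [DecidableEq V]
    (hconn : G.Connected) (ho : G.IsOrientation o) (r : V) (g : V → ZMod 2) (s : Finset V) :
    ∃ o', G.IsOrientation o' ∧
      outParity o' = outParity o + ∑ v ∈ s, (Pi.single v (g v) + Pi.single r (g v)) := by
  induction s using Finset.induction_on with
  | empty => exact ⟨o, ho, by rw [sum_empty, add_zero]⟩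
  | insert v s hv ih =>
    obtain ⟨o₁, ho₁, h₁⟩ := ih
    obtain ⟨o₂, ho₂, h₂⟩ := ho₁.exists_outParity_eq_add_single_add_single hconn v r (g v)
    refine ⟨o₂, ho₂, ?_⟩
    rw [h₂, h₁, sum_insert hv]
    abel

theorem IsOrientation.exists_outParity_eq [Fintype V] [DecidableEq V]
    (hconn : G.Connected) (ho : G.IsOrientation o) {f : V → ZMod 2}
    (hf : ∑ v, f v = ∑ v, outParity o v) : ∃ o', G.IsOrientation o' ∧ outParity o' = f := by
  obtain ⟨r⟩ := hconn.nonempty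
  -- As the entries of `g := f - outParity o` sum to zero,
  -- `g = ∑ v, (Pi.single v (g v) + Pi.single r (g v))`.
  obtain ⟨o', ho', h⟩ := ho.exists_outParity_eq_add_sum hconn r (f - outParity o) univ
  refine ⟨o', ho', ?_⟩
  have hr : ∑ v, (Pi.single r ((f - outParity o) v) : V → ZMod 2) = 0 := by
    funext x
    simp [Finset.sum_apply, Pi.single_apply, sum_sub_distrib, hf]
  rw [h, sum_add_distrib, univ_sum_single, hr]
  abel

theorem exists_isOrientation_outParity_eq_iff [Fintype V] [DecidableEq V] [DecidableRel G.Adj]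
    (hconn : G.Connected) (f : V → ZMod 2) :
    (∃ o, G.IsOrientation o ∧ outParity o = f) ↔ ∑ v, f v = #G.edgeFinset := by
  refine ⟨fun ⟨o, ho, h⟩ => h ▸ ho.sum_outParity, fun hf => ?_⟩
  obtain ⟨o, ho⟩ := G.exists_isOrientation
  exact ho.exists_outParity_eq hconn (hf.trans ho.sum_outParity.symm)

end SimpleGraph

end

/-- A simple connected graph with `m` edges has an orientation in which every vertex
has even out-degree iff `m` is even. -/
theorem even_orientation_iff_even_edges {V : Type*} [Fintype V] [DecidableEq V]
    (G : SimpleGraph V) [DecidableRel G.Adj] (hconn : G.Connected)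
    (m : ℕ) (hm : G.edgeFinset.card = m) :
    (∃ o : V → V → Bool,
        (∀ v w, o v w = true → G.Adj v w) ∧
        (∀ v w, G.Adj v w → o v w = !o w v) ∧
        (∀ v, Even (outdeg o v))) ↔ Even m := by
  calc _ ↔ ∃ o, G.IsOrientation o ∧ outParity o = 0 := by
        simp only [SimpleGraph.IsOrientation, and_assoc, funext_iff, outParity, Pi.zero_apply,
          ZMod.natCast_eq_zero_iff_even]
    _ ↔ ∑ v, (0 : V → ZMod 2) v = #G.edgeFinset :=
        SimpleGraph.exists_isOrientation_outParity_eq_iff hconn 0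
    _ ↔ Even m := by
        simp only [Pi.zero_apply, sum_const_zero, ← hm]
        exact eq_comm.trans ZMod.natCast_eq_zero_iff_even
end

section
/- Let k be an odd positive integer, and let a_1,…,a_k, b_1,…,b_k be Boolean values with a_i ≠ b_i for all i. Then the following formula X_k is satisfied if and only if the number of indices i with a_i = true is even: X_k is the conjunction of (1) for every subset S of {1,…,k} of even cardinality, the clause (⋁_{i∈S} a_i) ∨ (⋁_{i∉S} b_i), and (2) for every i, the clause (a_i ∨ b_i). -/
/-!
Since `b i = !a i`, the clauses `a i ∨ b i` hold trivially, and the clause of a set `S` is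
falsified exactly when `S` is the set of indices with `a i = false`. Hence `X_k` holds iff that
set has odd size, which for odd `k` means that the set of indices with `a i = true` has even size.
-/

open Finset

section
variable {ι : Type*} [Fintype ι]

theorem clause_iff_ne_filter_not (a b : ι → Bool) (hab : ∀ i, a i ≠ b i) (S : Finset ι) :
    ((∃ i ∈ S, a i = true) ∨ ∃ i ∉ S, b i = true) ↔ S ≠ univ.filter (¬a · = true) := by
  simp only [Ne, Finset.ext_iff, mem_filter, mem_univ, true_and, not_forall]
  grind

theorem even_card_filter_not_iff_of_odd_card (hι : Odd (Fintype.card ι)) (p : ι → Prop)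
    [DecidablePred p] : Even #(univ.filter (¬p ·)) ↔ ¬Even #(univ.filter p) := by
  have hsum := card_filter_add_card_filter_not (s := univ) p
  rw [card_univ] at hsum
  rw [← hsum, Nat.odd_add'] at hι
  rw [← Nat.not_odd_iff_even, hι]

end

theorem forall_even_card_ne_iff {ι : Type*} (T : Finset ι) :
    (∀ S : Finset ι, Even #S → S ≠ T) ↔ ¬Even #T :=
  ⟨fun h hT => h T hT rfl, fun hT _ hS hST => hT (hST ▸ hS)⟩

/-- For odd `k` and Booleans `a i ≠ b i`, the CFI subformula `X_k` — consisting of the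
clause `(⋁_{i∈S} a_i) ∨ (⋁_{i∉S} b_i)` for every even-cardinality `S ⊆ {1,…,k}` and
the clauses `(a_i ∨ b_i)` — is satisfied iff the number of indices with `a_i = true`
is even. -/
theorem Xk_sat_iff_even (k : ℕ) (hk : Odd k) (a b : Fin k → Bool)
    (hab : ∀ i, a i ≠ b i) :
    ((∀ S : Finset (Fin k), Even S.card →
        ((∃ i ∈ S, a i = true) ∨ (∃ i ∉ S, b i = true))) ∧
      (∀ i, a i = true ∨ b i = true)) ↔
      Even ((Finset.univ.filter fun i => a i = true).card) := by
  have hpair : ∀ i, a i = true ∨ b i = true := fun i => by grind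
  have hodd : Odd (Fintype.card (Fin k)) := by rwa [Fintype.card_fin]
  simp only [clause_iff_ne_filter_not a b hab, forall_even_card_ne_iff, hpair, implies_true,
    and_true, even_card_filter_not_iff_of_odd_card hodd, not_not]
end

section
/- For Boolean values ℓ_1, ℓ_2, ℓ_3 and auxiliary Boolean variables a, b, c, d, setting a = b = c = true satisfies all nine clauses: (ℓ_1 ∨ a ∨ ¬b), (ℓ_2 ∨ ¬a ∨ c), (ℓ_3 ∨ b ∨ ¬c), (a ∨ ¬c ∨ d), (a ∨ ¬c ∨ ¬d), (b ∨ ¬a ∨ d), (b ∨ ¬a ∨ ¬d), (c ∨ ¬b ∨ d), (c ∨ ¬b ∨ ¬d), regardless of the values of ℓ_1, ℓ_2, ℓ_3, d. Moreover, the set of satisfying assignments of any CNF formula f, projected to the variables of f, equals the set of satisfying assignments of f conjoined with these nine clauses (with fresh variables a, b, c, d) projected to the variables of f. -/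
/-- A literal is a variable together with a polarity (`true` = positive). -/
abbrev Lit (V : Type*) := V × Bool

/-- Evaluation of a literal under an assignment. -/
def evalLit {V : Type*} (σ : V → Bool) (l : Lit V) : Bool :=
  if l.2 then σ l.1 else !σ l.1

/-- An assignment satisfies a CNF formula if every clause contains a true literal. -/
def satCNF {V : Type*} (σ : V → Bool) (f : List (List (Lit V))) : Prop :=
  ∀ c ∈ f, ∃ l ∈ c, evalLit σ l = true

/-- Lift a literal of `f` into the extended variable type `V ⊕ Fin 4`. -/
def liftLit {V : Type*} (l : Lit V) : Lit (V ⊕ Fin 4) := (Sum.inl l.1, l.2)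

/-- The nine clauses of the degree-padding gadget for literals `ℓ₁, ℓ₂, ℓ₃`, with
fresh variables `a, b, c, d` (encoded as `Sum.inr 0, 1, 2, 3`). -/
def padGadget {V : Type*} (l₁ l₂ l₃ : Lit V) : List (List (Lit (V ⊕ Fin 4))) :=
  let a : Lit (V ⊕ Fin 4) := (Sum.inr 0, true)
  let b : Lit (V ⊕ Fin 4) := (Sum.inr 1, true)
  let c : Lit (V ⊕ Fin 4) := (Sum.inr 2, true)
  let d : Lit (V ⊕ Fin 4) := (Sum.inr 3, true)
  let neg : Lit (V ⊕ Fin 4) → Lit (V ⊕ Fin 4) := fun l => (l.1, !l.2)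
  [[liftLit l₁, a, neg b], [liftLit l₂, neg a, c], [liftLit l₃, b, neg c],
   [a, neg c, d], [a, neg c, neg d],
   [b, neg a, d], [b, neg a, neg d],
   [c, neg b, d], [c, neg b, neg d]]

theorem satCNF_append {V : Type*} (σ : V → Bool) (f g : List (List (Lit V))) :
    satCNF σ (f ++ g) ↔ satCNF σ f ∧ satCNF σ g := by
  simp only [satCNF, List.mem_append, or_imp, forall_and]

theorem evalLit_liftLit {V : Type*} (τ : V ⊕ Fin 4 → Bool) (l : Lit V) :
    evalLit τ (liftLit l) = evalLit (τ ∘ Sum.inl) l :=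
  rfl

theorem satCNF_map_liftLit {V : Type*} (τ : V ⊕ Fin 4 → Bool) (f : List (List (Lit V))) :
    satCNF τ (f.map fun c => c.map liftLit) ↔ satCNF (τ ∘ Sum.inl) f := by
  simp only [satCNF, List.forall_mem_map]
  refine forall₂_congr fun c _ => ?_
  simp only [List.mem_map, exists_exists_and_eq_and, evalLit_liftLit]

theorem satCNF_padGadget {V : Type*} (l₁ l₂ l₃ : Lit V) (τ : V ⊕ Fin 4 → Bool)
    (ha : τ (Sum.inr 0) = true) (hb : τ (Sum.inr 1) = true) (hc : τ (Sum.inr 2) = true) :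
    satCNF τ (padGadget l₁ l₂ l₃) := by
  have pos {i : Fin 4} {c : List (Lit (V ⊕ Fin 4))} (hi : τ (Sum.inr i) = true)
      (hmem : (Sum.inr i, true) ∈ c) : ∃ l ∈ c, evalLit τ l = true :=
    ⟨_, hmem, hi⟩
  intro c hmem
  simp only [padGadget, List.mem_cons, List.not_mem_nil, or_false] at hmem
  -- every clause contains `a`, `b` or `c` positively
  rcases hmem with rfl | rfl | rfl | rfl | rfl | rfl | rfl | rfl | rfl
  exacts [pos ha (by simp), pos hc (by simp), pos hb (by simp), pos ha (by simp), pos ha (by simp),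
    pos hb (by simp), pos hb (by simp), pos hc (by simp), pos hc (by simp)]

/-- Setting `a = b = c = true` satisfies all nine clauses of the padding gadget
regardless of `ℓ₁, ℓ₂, ℓ₃, d`; moreover, for any CNF formula `f` (over the variables
`V`, so that `a, b, c, d` are fresh) and any literals `ℓ₁, ℓ₂, ℓ₃`, the satisfying
assignments of `f` projected to the variables of `f` coincide with those of `f`
conjoined with the nine gadget clauses, projected to the variables of `f`. -/
theorem pad_gadget_preserves_solutions {V : Type*}
    (f : List (List (Lit V))) (l₁ l₂ l₃ : Lit V) :
    (∀ τ : (V ⊕ Fin 4) → Bool,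
      τ (Sum.inr 0) = true → τ (Sum.inr 1) = true → τ (Sum.inr 2) = true →
        ∀ c ∈ padGadget l₁ l₂ l₃, ∃ l ∈ c, evalLit τ l = true) ∧
    (∀ σ : V → Bool, satCNF σ f ↔
      ∃ τ : (V ⊕ Fin 4) → Bool, (∀ v, τ (Sum.inl v) = σ v) ∧
        satCNF τ ((f.map fun c => c.map liftLit) ++ padGadget l₁ l₂ l₃)) := by
  refine ⟨fun τ ha hb hc => satCNF_padGadget l₁ l₂ l₃ τ ha hb hc, fun σ => ⟨fun hσ => ?_, ?_⟩⟩
  · refine ⟨Sum.elim σ fun _ => true, fun _ => rfl, ?_⟩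
    rw [satCNF_append, satCNF_map_liftLit, Sum.elim_comp_inl]
    exact ⟨hσ, satCNF_padGadget l₁ l₂ l₃ _ rfl rfl rfl⟩
  · rintro ⟨τ, hτ, hsat⟩
    have hrestrict : τ ∘ Sum.inl = σ := funext hτ
    rw [satCNF_append, satCNF_map_liftLit, hrestrict] at hsat
    exact hsat.1
end

section
/- Let G be a finite simple graph and f_G the CNF formula with one variable x_v per vertex v, consisting of the clause (x_v ∨ x_w) for each edge {v,w} and the unit clause (x_v) for each vertex v. Then for any two graphs G and H, the formulas f_G and f_H are isomorphic (there are bijections of literals and clauses preserving negation and clause membership) if and only if G and H are isomorphic graphs. -/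
/-! Unit clauses are the only singletons of `f_G` and consist of the positive literals, so a
literal bijection mapping `f_G` onto `f_H` preserves polarity and restricts to a bijection
`φ : V ≃ W` of variables. For `v ≠ w` the clause `{x_v, x_w}` lies in `f_G` exactly when `vw` is an
edge, so `φ` is a graph isomorphism. Conversely, a graph isomorphism renames the variables. -/

/-- The CNF formula `f_G` of a graph `G`, with one positive variable per vertex:
the clause `(x_v ∨ x_w)` for each edge `{v, w}` and the unit clause `(x_v)` for
each vertex `v`. Literals are pairs `(variable, polarity)` and clauses are finsets
of literals. -/
def fG {V : Type*} [Fintype V] [DecidableEq V] (G : SimpleGraph V)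
    [DecidableRel G.Adj] : Finset (Finset (V × Bool)) :=
  ((Finset.univ.filter fun p : V × V => G.Adj p.1 p.2).image
      fun p => ({(p.1, true), (p.2, true)} : Finset (V × Bool))) ∪
    Finset.univ.image fun v => ({(v, true)} : Finset (V × Bool))

section

variable {V : Type*} [Fintype V] [DecidableEq V] (G : SimpleGraph V) [DecidableRel G.Adj]

lemma mem_fG {c : Finset (V × Bool)} :
    c ∈ fG G ↔ (∃ v w, G.Adj v w ∧ c = {(v, true), (w, true)}) ∨ ∃ v, c = {(v, true)} := by
  simp [fG, eq_comm]

lemma singleton_mem_fG (l : V × Bool) : {l} ∈ fG G ↔ l.2 = true := by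
  obtain ⟨v, b⟩ := l
  rw [mem_fG]
  constructor
  · rintro (⟨a, c, hac, h⟩ | ⟨u, h⟩)
    · have := congrArg Finset.card h
      rw [Finset.card_singleton, Finset.card_pair (by simpa using hac.ne)] at this
      omega
    · simp_all
  · rintro rfl
    exact .inr ⟨v, rfl⟩

lemma pair_mem_fG {v w : V} (hvw : v ≠ w) :
    {(v, true), (w, true)} ∈ fG G ↔ G.Adj v w := by
  rw [mem_fG]
  constructor
  · rintro (⟨a, b, hab, h⟩ | ⟨u, h⟩)
    · rw [← Finset.coe_inj, Finset.coe_pair, Finset.coe_pair, Set.pair_eq_pair_iff] at h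
      simp only [Prod.mk.injEq, and_true] at h
      rcases h with ⟨rfl, rfl⟩ | ⟨rfl, rfl⟩
      exacts [hab, hab.symm]
    · have := congrArg Finset.card h
      rw [Finset.card_singleton, Finset.card_pair (by simpa using hvw)] at this
      omega
  · exact fun h => .inl ⟨v, w, h, rfl⟩

end

def Equiv.fibreEquiv {α β γ : Type*} (e : α × β ≃ γ × β) (he : ∀ p, (e p).2 = p.2) (b : β) :
    α ≃ γ where
  toFun a := (e (a, b)).1
  invFun c := (e.symm (c, b)).1
  left_inv a := by
    have : ((e (a, b)).1, b) = e (a, b) := Prod.ext rfl (he (a, b)).symm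
    simp [this]
  right_inv c := by
    have : ((e.symm (c, b)).1, b) = e.symm (c, b) := by
      refine Prod.ext rfl ?_
      simpa using he (e.symm (c, b))
    simp [this]

lemma Equiv.apply_mk_eq_fibreEquiv {α β γ : Type*} (e : α × β ≃ γ × β)
    (he : ∀ p, (e p).2 = p.2) (a : α) (b : β) : e (a, b) = (e.fibreEquiv he b a, b) :=
  Prod.ext rfl (he (a, b))

section

variable {V W : Type*} [Fintype V] [DecidableEq V] [Fintype W] [DecidableEq W]
  {G : SimpleGraph V} [DecidableRel G.Adj] {H : SimpleGraph W} [DecidableRel H.Adj]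

lemma image_mem_fG_of_iso (e : G ≃g H) {c : Finset (V × Bool)} (hc : c ∈ fG G) :
    c.image (e.toEquiv.prodCongr (Equiv.refl Bool)) ∈ fG H := by
  rw [mem_fG] at hc ⊢
  rcases hc with ⟨v, w, h, rfl⟩ | ⟨v, rfl⟩
  · exact .inl ⟨e v, e w, e.map_adj_iff.2 h, by simp⟩
  · exact .inr ⟨e v, by simp⟩

lemma image_fG_of_iso (e : G ≃g H) :
    (fG G).image (Finset.image (e.toEquiv.prodCongr (Equiv.refl Bool))) = fG H := by
  ext c
  refine ⟨fun hc => ?_, fun hc => ?_⟩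
  · obtain ⟨d, hd, rfl⟩ := Finset.mem_image.1 hc
    exact image_mem_fG_of_iso e hd
  · refine Finset.mem_image.2 ⟨c.image (e.toEquiv.prodCongr (Equiv.refl Bool)).symm,
      image_mem_fG_of_iso e.symm hc, ?_⟩
    rw [Finset.image_image, Equiv.self_comp_symm, Finset.image_id]

end

/-- `f_G` and `f_H` are isomorphic as CNF formulas — there is a bijection of
literals commuting with negation that induces a bijection of clauses — iff the
graphs `G` and `H` are isomorphic. -/
theorem fG_iso_iff_graph_iso {V W : Type*} [Fintype V] [DecidableEq V]
    [Fintype W] [DecidableEq W] (G : SimpleGraph V) [DecidableRel G.Adj]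
    (H : SimpleGraph W) [DecidableRel H.Adj] :
    (∃ σL : (V × Bool) ≃ (W × Bool),
        (∀ l : V × Bool, σL (l.1, !l.2) = ((σL l).1, !(σL l).2)) ∧
        (fG G).image (fun c => c.image σL) = fG H) ↔
      Nonempty (G ≃g H) := by
  constructor
  · rintro ⟨σL, -, himg⟩
    have hmem : ∀ c, c ∈ fG G ↔ c.image σL ∈ fG H := fun c => by
      rw [← himg, (Finset.image_injective σL.injective).mem_finset_image]
    have hpol : ∀ l, (σL l).2 = l.2 := fun l => by
      rw [Bool.eq_iff_iff, ← singleton_mem_fG G, ← singleton_mem_fG H, hmem,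
        Finset.image_singleton]
    set φ := σL.fibreEquiv hpol true
    refine ⟨⟨φ, fun {v w} => ?_⟩⟩
    rcases eq_or_ne v w with rfl | hvw
    · simp
    rw [← pair_mem_fG G hvw, ← pair_mem_fG H (φ.injective.ne hvw), hmem, Finset.image_insert,
      Finset.image_singleton, σL.apply_mk_eq_fibreEquiv hpol, σL.apply_mk_eq_fibreEquiv hpol]
  · rintro ⟨e⟩
    exact ⟨e.toEquiv.prodCongr (Equiv.refl Bool), fun _ => rfl, image_fG_of_iso e⟩
end
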